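/- Let X, Y, Z be discrete random variables on a finite probability space. X and Y are conditionally independent given Z with Z taking at most p values if and only if the joint probability matrix P(X = x, Y = y) can be written as a sum of p nonnegative rank-one matrices, each proportional to an outer product of probability vectors. Consequently, the minimal number of states of a latent variable Z rendering X and Y conditionally independent equals the nonnegative rank of the joint probability matrix of (X, Y). -/

import Mathlib

open Finset

/-- A representation of the joint probability matrix `P` via a latent variable `Z`
with `p` states rendering `X` and `Y` conditionally independent given `Z`:
`P(X=i, Y=j) = Σ_z P(Z=z) P(X=i|Z=z) P(Y=j|Z=z)`. -/
def CIRep {m n : ℕ} (P : Matrix (Fin m) (Fin n) ℝ) (p : ℕ) : Prop :=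
  ∃ (pz : Fin p → ℝ) (px : Fin p → Fin m → ℝ) (py : Fin p → Fin n → ℝ),
    (∀ z, 0 ≤ pz z) ∧ (∑ z, pz z = 1) ∧
    (∀ z i, 0 ≤ px z i) ∧ (∀ z, ∑ i, px z i = 1) ∧
    (∀ z j, 0 ≤ py z j) ∧ (∀ z, ∑ j, py z j = 1) ∧
    (∀ i j, P i j = ∑ z, pz z * px z i * py z j)

/-- `P` is a convex combination of `p` rank-one bivariate probability matrices
(outer products of probability vectors). -/
def ConvexRankOneDecomp {m n : ℕ} (P : Matrix (Fin m) (Fin n) ℝ) (p : ℕ) : Prop :=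
  ∃ (lam : Fin p → ℝ) (u : Fin p → Fin m → ℝ) (v : Fin p → Fin n → ℝ),
    (∀ k, 0 ≤ lam k) ∧ (∑ k, lam k = 1) ∧
    (∀ k i, 0 ≤ u k i) ∧ (∀ k, ∑ i, u k i = 1) ∧
    (∀ k j, 0 ≤ v k j) ∧ (∀ k, ∑ j, v k j = 1) ∧
    (∀ i j, P i j = ∑ k, lam k * u k i * v k j)

/-- The nonnegative rank of a matrix: the smallest `p` admitting a factorization
`P = B * C` with `B, C` entrywise nonnegative. -/
noncomputable def nnRank {m n : ℕ} (P : Matrix (Fin m) (Fin n) ℝ) : ℕ :=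
  sInf {p : ℕ | ∃ (B : Matrix (Fin m) (Fin p) ℝ) (C : Matrix (Fin p) (Fin n) ℝ),
    (∀ i k, 0 ≤ B i k) ∧ (∀ k j, 0 ≤ C k j) ∧ P = B * C}

/-- On a vector with zero sum the uniform distribution is returned (the conditional law given a
null latent state is arbitrary), so the result is a probability vector whenever `ι` is nonempty. -/
noncomputable def probNormalize {ι : Type*} [Fintype ι] (w : ι → ℝ) : ι → ℝ :=
  if ∑ i, w i = 0 then fun _ => (Fintype.card ι : ℝ)⁻¹ else fun i => w i / ∑ i, w i

section probNormalize

variable {ι : Type*} [Fintype ι] {w : ι → ℝ}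

lemma probNormalize_nonneg (hw : ∀ i, 0 ≤ w i) (i : ι) : 0 ≤ probNormalize w i := by
  unfold probNormalize
  split_ifs
  · positivity
  · exact div_nonneg (hw i) (sum_nonneg fun j _ => hw j)

lemma sum_probNormalize [Nonempty ι] (w : ι → ℝ) : ∑ i, probNormalize w i = 1 := by
  unfold probNormalize
  split_ifs with h
  · simp [Finset.card_univ]
  · rw [← sum_div, div_self h]

lemma sum_mul_probNormalize (hw : ∀ i, 0 ≤ w i) (i : ι) :
    (∑ j, w j) * probNormalize w i = w i := by
  unfold probNormalize
  split_ifs with h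
  · rw [h, zero_mul, ((sum_eq_zero_iff_of_nonneg fun j _ => hw j).mp h i (mem_univ i))]
  · exact mul_div_cancel₀ _ h

end probNormalize

lemma Matrix.sum_sum_mul_apply {ι κ μ α : Type*} [Fintype ι] [Fintype κ] [Fintype μ]
    [NonUnitalNonAssocSemiring α] (B : Matrix ι κ α) (C : Matrix κ μ α) :
    ∑ i, ∑ j, (B * C) i j = ∑ k, (∑ i, B i k) * ∑ j, C k j := by
  simp only [Matrix.mul_apply, sum_mul_sum]
  exact (sum_congr rfl fun _ _ => Finset.sum_comm).trans Finset.sum_comm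

section CIRep

variable {m n p : ℕ} {P : Matrix (Fin m) (Fin n) ℝ}

lemma CIRep.exists_nonneg_factorization (h : CIRep P p) :
    ∃ (B : Matrix (Fin m) (Fin p) ℝ) (C : Matrix (Fin p) (Fin n) ℝ),
      (∀ i k, 0 ≤ B i k) ∧ (∀ k j, 0 ≤ C k j) ∧ P = B * C := by
  obtain ⟨pz, px, py, hz, -, hx, -, hy, -, hP⟩ := h
  exact ⟨Matrix.of fun i k => pz k * px k i, Matrix.of fun k j => py k j,
    fun i k => mul_nonneg (hz k) (hx k i), hy, Matrix.ext hP⟩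

/-- The latent state `k` gets the weight `P(Z = k) = (Σᵢ Bᵢₖ)(Σⱼ Cₖⱼ)`, and the conditional
laws are column `k` of `B` and row `k` of `C`, normalized. -/
lemma CIRep.of_nonneg_factorization (hsum : ∑ i, ∑ j, P i j = 1)
    (B : Matrix (Fin m) (Fin p) ℝ) (C : Matrix (Fin p) (Fin n) ℝ)
    (hB : ∀ i k, 0 ≤ B i k) (hC : ∀ k j, 0 ≤ C k j) (hP : P = B * C) : CIRep P p := by
  obtain ⟨i₀, -, hi₀⟩ := exists_ne_zero_of_sum_ne_zero (hsum ▸ one_ne_zero)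
  have : Nonempty (Fin m) := ⟨i₀⟩
  have : Nonempty (Fin n) := univ_nonempty_iff.mp (nonempty_of_sum_ne_zero hi₀)
  refine ⟨fun k => (∑ i, B i k) * ∑ j, C k j, fun k => probNormalize (B · k),
    fun k => probNormalize (C k), fun k => mul_nonneg (sum_nonneg fun i _ => hB i k)
      (sum_nonneg fun j _ => hC k j), ?_, fun k => probNormalize_nonneg (hB · k),
    fun k => sum_probNormalize _, fun k => probNormalize_nonneg (hC k),
    fun k => sum_probNormalize _, fun i j => ?_⟩
  · rw [← Matrix.sum_sum_mul_apply, ← hP, hsum]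
  · rw [hP, Matrix.mul_apply]
    refine sum_congr rfl fun k _ => ?_
    rw [← sum_mul_probNormalize (hB · k) i, ← sum_mul_probNormalize (hC k) j]
    ring

end CIRep

theorem ci_iff_rank_one_decomp_and_min_states_eq_nnRank_general {m n : ℕ}
    (P : Matrix (Fin m) (Fin n) ℝ)
    (hsum : ∑ i, ∑ j, P i j = 1) :
    (∀ p : ℕ, CIRep P p ↔ ConvexRankOneDecomp P p) ∧
    sInf {p : ℕ | CIRep P p} = nnRank P := by
  refine ⟨fun p => Iff.rfl, congrArg sInf (Set.ext fun p => ?_)⟩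
  exact ⟨CIRep.exists_nonneg_factorization,
    fun ⟨B, C, hB, hC, hP⟩ => CIRep.of_nonneg_factorization hsum B C hB hC hP⟩

/-- Conditional independence given a `p`-state latent variable is equivalent to a
convex decomposition of the joint probability matrix into `p` nonnegative rank-one
probability matrices; consequently the minimal number of latent states equals the
nonnegative rank of the joint probability matrix. -/
theorem ci_iff_rank_one_decomp_and_min_states_eq_nnRank {m n : ℕ}
    (P : Matrix (Fin m) (Fin n) ℝ)
    (hpos : ∀ i j, 0 ≤ P i j) (hsum : ∑ i, ∑ j, P i j = 1) :
    (∀ p : ℕ, CIRep P p ↔ ConvexRankOneDecomp P p) ∧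
    sInf {p : ℕ | CIRep P p} = nnRank P :=
  ci_iff_rank_one_decomp_and_min_states_eq_nnRank_general P hsum
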